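/- arXiv:math/0508212 — 3 statements merged into one kernel-verified Lean document; each statement's English description precedes it below -/
import Mathlib

section
/- Let w : ZMod n → ℤ. If for every index i there exists m with 0 ≤ m ≤ n-1 such that the partial sum ∑_{j=0}^{m} w(i+j) > 0, then the total sum ∑_{i} w(i) > 0. -/
/-- Contrapositive of the determining-vertex lemma: if from every starting
vertex some partial sum is positive, then the total value of the cycle is
positive. -/
theorem stmt3 (n : ℕ) (hn : 1 ≤ n) (w : ZMod n → ℤ)
    (h : ∀ i : ZMod n, ∃ m : ℕ, m ≤ n - 1 ∧
      0 < ∑ j ∈ Finset.range (m + 1), w (i + (j : ZMod n))) :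
    0 < ∑ i ∈ Finset.range n, w (i : ZMod n) := by
  haveI : NeZero n := ⟨by omega⟩
  set T : ℤ := ∑ i ∈ Finset.range n, w (i : ZMod n) with hT
  -- choice of m
  set m : ZMod n → ℕ := fun i => (h i).choose with hm
  have hmpos : ∀ i : ZMod n,
      0 < ∑ j ∈ Finset.range (m i + 1), w (i + (j : ZMod n)) :=
    fun i => (h i).choose_spec.2
  -- Fact A : sum over a full window equals T
  have factA : ∀ c : ZMod n, ∑ j ∈ Finset.range n, w (c + (j : ZMod n)) = T := by
    intro c
    have huniv : ∀ c : ZMod n,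
        ∑ j ∈ Finset.range n, w (c + (j : ZMod n)) = ∑ i : ZMod n, w i := by
      intro c
      refine Finset.sum_nbij' (fun j => c + (j : ZMod n)) (fun i => (i - c).val)
        ?_ ?_ ?_ ?_ ?_
      · intro a _; exact Finset.mem_univ _
      · intro a _; exact Finset.mem_range.mpr (ZMod.val_lt _)
      · intro a ha
        show ((c + (a : ZMod n)) - c).val = a
        have : ((c + (a : ZMod n)) - c) = (a : ZMod n) := by ring
        rw [this, ZMod.val_natCast_of_lt (Finset.mem_range.mp ha)]
      · intro i _
        show c + (((i - c).val : ℕ) : ZMod n) = i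
        rw [ZMod.natCast_val, ZMod.cast_id]; ring
      · intro a _; rfl
    rw [huniv c, hT, ← huniv 0]
    simp
  -- W : cumulative sums
  set W : ℕ → ℤ := fun a => ∑ j ∈ Finset.range a, w ((j : ℕ) : ZMod n) with hW
  have factC : ∀ a b : ℕ,
      W (a + b) = W a + ∑ j ∈ Finset.range b, w (((a : ℕ) : ZMod n) + (j : ZMod n)) := by
    intro a b
    rw [hW]
    simp only [Finset.sum_range_add]
    congr 1
    apply Finset.sum_congr rfl
    intro j _
    push_cast
    ring_nf
  have factB : ∀ a : ℕ, W (a + n) = W a + T := by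
    intro a; rw [factC a n, factA]
  have factB' : ∀ a q : ℕ, W (a + q * n) = W a + q * T := by
    intro a q
    induction q with
    | zero => simp
    | succ k ih =>
      have : a + (k + 1) * n = (a + k * n) + n := by ring
      rw [this, factB, ih]
      push_cast; ring
  -- the chain g
  set g : ℕ → ℕ := fun k => Nat.rec 0 (fun _ prev => prev + (m (prev : ZMod n) + 1)) k
    with hg
  have hgsucc : ∀ k, g (k + 1) = g k + (m ((g k : ℕ) : ZMod n) + 1) := fun k => rfl
  have hgmono : StrictMono g := by
    apply strictMono_nat_of_lt_succ
    intro k; rw [hgsucc]; omega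
  have hWstep : ∀ k, W (g k) < W (g (k + 1)) := by
    intro k
    rw [hgsucc, factC]
    have := hmpos ((g k : ℕ) : ZMod n)
    linarith
  have hWmono : StrictMono (fun k => W (g k)) := strictMono_nat_of_lt_succ hWstep
  -- pigeonhole
  obtain ⟨k, hk, l, hl, hne, heq⟩ :
      ∃ k ∈ Finset.range (n + 1), ∃ l ∈ Finset.range (n + 1), k ≠ l ∧ g k % n = g l % n := by
    have := Finset.exists_ne_map_eq_of_card_lt_of_maps_to
      (s := Finset.range (n + 1)) (t := Finset.range n)
      (by simp) (f := fun k => g k % n)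
      (fun k _ => Finset.mem_range.mpr (Nat.mod_lt _ (by omega)))
    obtain ⟨k, hk, l, hl, hne, heq⟩ := this
    exact ⟨k, hk, l, hl, hne, heq⟩
  wlog hkl : k < l generalizing k l
  · exact this l hl k hk hne.symm heq.symm (by omega)
  have hglt : g k < g l := hgmono hkl
  have hdvd : n ∣ g l - g k := (Nat.modEq_iff_dvd' hglt.le).mp heq
  obtain ⟨q, hq⟩ := hdvd
  rw [mul_comm] at hq
  have hql : g l = g k + q * n := by omega
  have hqpos : 0 < q := by
    rcases Nat.eq_zero_or_pos q with h0 | h0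
    · subst h0; simp at hq; omega
    · exact h0
  have hWlt : W (g k) < W (g l) := hWmono hkl
  rw [hql, factB'] at hWlt
  have : 0 < (q : ℤ) * T := by linarith
  have hq' : (0 : ℤ) < q := by exact_mod_cast hqpos
  nlinarith
end

section
/- Let M be a symmetric real cost matrix on a finite vertex set and let σ be a fixed-point-free involution (perfect matching). If there exists an 'acceptable cycle' C for σ whose value in the reduced matrix σ⁻¹M⁻ is negative, then σ is not a minimum-weight perfect matching; conversely, if σ is not minimum, then such a negative-valued acceptable cycle exists. Hence σ is a minimum-weight perfect matching if and only if σ⁻¹M⁻ admits no negatively-valued acceptable cycle. -/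
open Equiv Equiv.Perm Finset

/-- Parity argument: if `σ, τ` are fixed-point-free involutions then no power of
`σ * τ` can carry `x` to `σ x`. -/
private lemma no_sigma_in_orbit {V : Type*} (σ τ : Equiv.Perm V)
    (hσ : ∀ x, σ (σ x) = x) (hτ : ∀ x, τ (τ x) = x)
    (hfσ : ∀ x, σ x ≠ x) (hfτ : ∀ x, τ x ≠ x)
    (x : V) (k : ℤ) (hk : ((σ * τ) ^ k) x = σ x) : False := by
  set ρ := σ * τ with hρ
  have hσ2 : σ * σ = 1 := Equiv.ext fun z => hσ z
  have hτ2 : τ * τ = 1 := Equiv.ext fun z => hτ z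
  have hσi : σ⁻¹ = σ := (eq_inv_of_mul_eq_one_left hσ2).symm
  have hτi : τ⁻¹ = τ := (eq_inv_of_mul_eq_one_left hτ2).symm
  have h1 : σ * ρ * σ⁻¹ = ρ⁻¹ := by
    ext z
    simp [hρ, hσi, hτi, Equiv.Perm.mul_apply, hσ]
  have hconj : ∀ n : ℤ, σ * ρ ^ n * σ⁻¹ = ρ ^ (-n) := by
    intro n
    have h2 := map_zpow (MulAut.conj σ) ρ n
    simp only [MulAut.conj_apply] at h2
    rw [h2, h1, inv_zpow, zpow_neg]
  have hmove : ∀ (n : ℤ) (z : V), σ ((ρ ^ n) z) = (ρ ^ (-n)) (σ z) := by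
    intro n z
    have h3 := congrArg (fun g : Equiv.Perm V => g (σ z)) (hconj n)
    simpa [Equiv.Perm.mul_apply, hσi, hσ] using h3
  have habs : ∀ a b : ℤ, (ρ ^ a) ((ρ ^ b) x) = (ρ ^ (a + b)) x := by
    intro a b; rw [← Equiv.Perm.mul_apply, ← zpow_add]
  rcases Int.even_or_odd k with ⟨j, hj⟩ | ⟨j, hj⟩
  · refine hfσ ((ρ ^ j) x) ?_
    have he : -j + k = j := by rw [hj]; ring
    calc σ ((ρ ^ j) x) = (ρ ^ (-j)) (σ x) := hmove j x
      _ = (ρ ^ (-j)) ((ρ ^ k) x) := by rw [hk]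
      _ = (ρ ^ (-j + k)) x := habs _ _
      _ = (ρ ^ j) x := by rw [he]
  · refine hfτ ((ρ ^ j) x) ?_
    have hτσρ : ∀ z, τ z = σ (ρ z) := by
      intro z; simp [hρ, Equiv.Perm.mul_apply, hσ]
    have he : -(j + 1) + k = j := by rw [hj]; ring
    calc τ ((ρ ^ j) x) = σ (ρ ((ρ ^ j) x)) := hτσρ _
      _ = σ ((ρ ^ (1 + j)) x) := by rw [← habs 1 j, zpow_one]
      _ = (ρ ^ (-(1 + j))) (σ x) := hmove _ _
      _ = (ρ ^ (-(1 + j))) ((ρ ^ k) x) := by rw [hk]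
      _ = (ρ ^ (-(1 + j) + k)) x := habs _ _
      _ = (ρ ^ j) x := by rw [show -(1 + j) + k = j by rw [hj]; ring]

/-- Theorem 9: a perfect matching `σ` (fixed-point-free involution) is of
minimum weight with respect to a symmetric cost matrix `M` if and only if the
reduced matrix `σ⁻¹M⁻`, with entries `d a b = M a (σ b) − M a (σ a)`, admits
no negatively-valued acceptable cycle. -/
theorem stmt6 {V : Type*} [Fintype V] [DecidableEq V]
    (M : V → V → ℝ) (hM : ∀ a b, M a b = M b a)
    (σ : Equiv.Perm V) (hinv : ∀ x, σ (σ x) = x) (hfpf : ∀ x, σ x ≠ x) :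
    (∀ τ : Equiv.Perm V, (∀ x, τ (τ x) = x) → (∀ x, τ x ≠ x) →
        ∑ x, M x (σ x) ≤ ∑ x, M x (τ x)) ↔
      ¬ ∃ C : Equiv.Perm V, C.IsCycle ∧
          (∀ x ∈ C.support, ∀ y ∈ C.support, σ x ≠ y) ∧
          ∑ x ∈ C.support, (M x (σ (C x)) - M x (σ x)) < 0 := by
  constructor
  · -- minimality ⇒ no negative acceptable cycle
    intro hmin
    rintro ⟨C, hC, hacc, hval⟩
    set S := C.support with hS
    set τ : Equiv.Perm V := C⁻¹ * σ * C with hτdef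
    have hτapp : ∀ x, τ x = C⁻¹ (σ (C x)) := fun x => rfl
    have hτinv : ∀ x, τ (τ x) = x := by
      intro x; simp [hτapp, hinv]
    have hτfpf : ∀ x, τ x ≠ x := by
      intro x h
      apply hfpf (C x)
      have h2 := congrArg C h
      rw [hτapp] at h2
      simpa using h2
    have hSnot : ∀ x ∈ S, σ x ∉ S := fun x hx h => hacc x hx (σ x) h rfl
    have hτS : ∀ x ∈ S, τ x = σ (C x) := by
      intro x hx
      have h1 : C x ∈ S := apply_mem_support.2 hx
      have h2 : σ (C x) ∉ S := hSnot _ h1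
      have h3 : C⁻¹ (σ (C x)) = σ (C x) := by
        rw [Equiv.Perm.inv_eq_iff_eq]
        exact (notMem_support.mp h2).symm
      rw [hτapp, h3]
    have hτT : ∀ x ∈ S, τ (σ x) = C⁻¹ x := by
      intro x hx
      have h2 : σ x ∉ S := hSnot x hx
      rw [hτapp, notMem_support.mp h2, hinv]
    have hτelse : ∀ x, x ∉ S → x ∉ S.image σ → τ x = σ x := by
      intro x h1 h2
      have hσx : σ x ∉ S := fun h => h2 (Finset.mem_image.2 ⟨σ x, h, hinv x⟩)
      have h3 : C⁻¹ (σ x) = σ x := by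
        rw [Equiv.Perm.inv_eq_iff_eq]
        exact (notMem_support.mp hσx).symm
      rw [hτapp, notMem_support.mp h1, h3]
    have hdisj : Disjoint S (S.image σ) := by
      rw [Finset.disjoint_left]
      intro a ha hb
      obtain ⟨b, hb', hba⟩ := Finset.mem_image.1 hb
      exact hacc b hb' a ha hba
    have hle := hmin τ hτinv hτfpf
    -- compute the weight difference
    have hdiff : ∑ x, M x (τ x) - ∑ x, M x (σ x)
        = 2 * ∑ x ∈ S, (M x (σ (C x)) - M x (σ x)) := by
      rw [← Finset.sum_sub_distrib]
      have hzero : ∀ x ∈ (Finset.univ : Finset V), x ∉ S ∪ S.image σ →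
          M x (τ x) - M x (σ x) = 0 := by
        intro x _ hx
        rw [hτelse x (fun h => hx (Finset.mem_union_left _ h))
          (fun h => hx (Finset.mem_union_right _ h)), sub_self]
      rw [← Finset.sum_subset (Finset.subset_univ (S ∪ S.image σ)) hzero,
        Finset.sum_union hdisj]
      have e1 : ∑ x ∈ S, (M x (τ x) - M x (σ x))
          = ∑ x ∈ S, (M x (σ (C x)) - M x (σ x)) :=
        Finset.sum_congr rfl fun x hx => by rw [hτS x hx]
      have e2 : ∑ x ∈ S.image σ, (M x (τ x) - M x (σ x))
          = ∑ x ∈ S, (M x (σ (C x)) - M x (σ x)) := by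
        rw [Finset.sum_image (fun x _ y _ h => σ.injective h)]
        have e3 : ∑ x ∈ S, (M (σ x) (τ (σ x)) - M (σ x) (σ (σ x)))
            = ∑ x ∈ S, (M (C⁻¹ x) (σ x) - M x (σ x)) :=
          Finset.sum_congr rfl fun x hx => by
            rw [hτT x hx, hinv, hM (σ x) (C⁻¹ x), hM (σ x) x]
        rw [e3]
        have e4 : ∑ x ∈ S, M (C⁻¹ x) (σ x) = ∑ x ∈ S, M x (σ (C x)) := by
          refine Finset.sum_nbij' (fun x => C⁻¹ x) (fun x => C x) ?_ ?_ ?_ ?_ ?_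
          · intro a ha
            have h : a ∈ C⁻¹.support := by rw [support_inv]; exact ha
            have h' := apply_mem_support.2 h
            rwa [support_inv] at h'
          · intro a ha; exact apply_mem_support.2 ha
          · intro a _; simp
          · intro a _; simp
          · intro a _; simp
        rw [Finset.sum_sub_distrib, e4, ← Finset.sum_sub_distrib]
      rw [e1, e2]; ring
    linarith
  · -- no negative acceptable cycle ⇒ minimality
    intro hno τ hτinv hτfpf
    set ρ : Equiv.Perm V := σ * τ with hρ
    have hρapp : ∀ x, ρ x = σ (τ x) := fun x => rfl
    have hστ : ∀ x, σ (ρ x) = τ x := by intro x; rw [hρapp, hinv]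
    rw [← sub_nonneg, ← Finset.sum_sub_distrib]
    have hsupp : ∀ x ∈ (Finset.univ : Finset V), x ∉ ρ.support →
        M x (τ x) - M x (σ x) = 0 := by
      intro x _ hx
      have h1 : ρ x = x := notMem_support.mp hx
      have h2 : τ x = σ x := by
        have := congrArg σ h1
        rwa [hρapp, hinv] at this
      rw [h2, sub_self]
    rw [← Finset.sum_subset (Finset.subset_univ ρ.support) hsupp]
    have hbU : ρ.support = ρ.cycleFactorsFinset.biUnion Equiv.Perm.support := by
      ext x
      rw [Finset.mem_biUnion]
      exact mem_support_iff_mem_support_of_mem_cycleFactorsFinset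
    rw [hbU, Finset.sum_biUnion (fun c hc c' hc' hne =>
      ((ρ.cycleFactorsFinset_pairwise_disjoint hc hc' hne).disjoint_support))]
    refine Finset.sum_nonneg fun c hc => ?_
    by_contra hneg
    push_neg at hneg
    obtain ⟨hcyc, happ⟩ := mem_cycleFactorsFinset_iff.mp hc
    refine hno ⟨c, hcyc, ?_, ?_⟩
    · -- acceptability
      intro x hx y hy hxy
      have hcx : c = ρ.cycleOf x := cycle_is_cycleOf hx hc
      have hyc : ρ.SameCycle x y := by
        rw [hcx] at hy
        exact (mem_support_cycleOf_iff.mp hy).1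
      obtain ⟨k, hk⟩ := hyc
      have hk' : ((σ * τ) ^ k) x = σ x := by
        have : (ρ ^ k) x = σ x := hk.trans hxy.symm
        exact this
      exact no_sigma_in_orbit σ τ hinv hτinv hfpf hτfpf x k hk'
    · have : ∑ x ∈ c.support, (M x (σ (c x)) - M x (σ x))
          = ∑ x ∈ c.support, (M x (τ x) - M x (σ x)) :=
        Finset.sum_congr rfl fun x hx => by rw [happ x hx, hστ]
      rw [this]
      exact hneg
end

section
/- Let σ be a fixed-point-free involution on a finite set V and let C and D be two acceptable cycles for σ whose supports have no two points in the same 2-cycle of σ (i.e., for every x in the support of C and y in the support of D, σ(x) ≠ y and x ≠ y). Then C and D commute as permutations, and the product σ ∘ (C C') ∘ (D D') (with companion cycles C', D') is again a fixed-point-free involution. -/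
/-!
Write `C' = σ C⁻¹ σ` and `D' = σ D⁻¹ σ`; their supports are the `σ`-images of those of `C`
and `D`. Acceptability and compatibility make the four supports pairwise disjoint, so `C`
commutes with `D` and `A = C C'` commutes with `B = D D'`. Since `σ A σ = A⁻¹` and
`σ B σ = B⁻¹`, the permutation `σ A B` squares to `A⁻¹ B⁻¹ A B = 1`. It has no fixed point
because `A B x ≠ σ x` for every `x`: an acceptable cycle never sends a point to its
`σ`-partner, this passes to companions, and it survives products of disjoint permutations.
-/

theorem mul_mul_inv_mul_conj_eq_inv {G : Type*} [Group G] {s : G} (hs : s * s = 1) (g : G) :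
    s * (g * (s * g⁻¹ * s)) * s = (g * (s * g⁻¹ * s))⁻¹ := by
  have hs' : s⁻¹ = s := inv_eq_of_mul_eq_one_right hs
  simp only [mul_inv_rev, inv_inv, hs', mul_assoc, hs, mul_one]

theorem mul_mul_mul_self_eq_one {G : Type*} [Group G] {s a b : G} (hs : s * s = 1)
    (ha : s * a * s = a⁻¹) (hb : s * b * s = b⁻¹) (hab : Commute a b) :
    s * a * b * (s * a * b) = 1 := by
  calc s * a * b * (s * a * b) = (s * a * s) * (s * b * s) * (a * b) := by
        simp only [mul_assoc, ← mul_assoc s s, hs, one_mul]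
    _ = 1 := by rw [ha, hb, hab.eq]; group

namespace Equiv.Perm

variable {α : Type*} {σ P Q : Perm α}

theorem conj_inv_apply_ne_self (hσ : Function.Involutive σ) {x : α}
    (h : (σ * P⁻¹ * σ) x ≠ x) : P (σ x) ≠ σ x := by
  intro hP
  apply h
  rw [mul_apply, mul_apply, inv_eq_iff_eq.mpr hP.symm, hσ]

theorem apply_ne_of_disjoint_mul (hPQ : P.Disjoint Q) (hP : ∀ x, P x ≠ σ x)
    (hQ : ∀ x, Q x ≠ σ x) (x : α) : (P * Q) x ≠ σ x := by
  rw [mul_apply]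
  by_cases hx : Q x = x
  · rw [hx]; exact hP x
  · have hQQx : Q (Q x) ≠ Q x := fun h => hx (Q.injective h)
    rw [(hPQ (Q x)).resolve_right hQQx]
    exact hQ x

theorem conj_inv_apply_ne (hσ : Function.Involutive σ) (hP : ∀ x, P x ≠ σ x) (x : α) :
    (σ * P⁻¹ * σ) x ≠ σ x := by
  intro h
  rw [mul_apply, mul_apply, hσ.injective.eq_iff, inv_eq_iff_eq] at h
  exact hP x h.symm

variable [Fintype α] [DecidableEq α]

theorem apply_ne_of_forall_support_ne (hfpf : ∀ x, σ x ≠ x)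
    (hP : ∀ x ∈ P.support, ∀ y ∈ P.support, σ x ≠ y) (x : α) : P x ≠ σ x := by
  intro h
  by_cases hx : x ∈ P.support
  · exact hP x hx (P x) (apply_mem_support.mpr hx) h.symm
  · exact hfpf x (h ▸ notMem_support.mp hx)

theorem disjoint_conj_inv_of_forall_support_ne (hσ : Function.Involutive σ)
    (hPQ : ∀ x ∈ P.support, ∀ y ∈ Q.support, σ x ≠ y) :
    P.Disjoint (σ * Q⁻¹ * σ) := by
  intro x
  by_contra! h
  exact hPQ x (mem_support.mpr h.1) (σ x) (mem_support.mpr (conj_inv_apply_ne_self hσ h.2)) rfl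

theorem mul_conj_inv_apply_ne (hσ : Function.Involutive σ) (hfpf : ∀ x, σ x ≠ x)
    (hP : ∀ x ∈ P.support, ∀ y ∈ P.support, σ x ≠ y) (x : α) :
    (P * (σ * P⁻¹ * σ)) x ≠ σ x :=
  have hPσ := apply_ne_of_forall_support_ne hfpf hP
  apply_ne_of_disjoint_mul (disjoint_conj_inv_of_forall_support_ne hσ hP) hPσ
    (conj_inv_apply_ne hσ hPσ) x

end Equiv.Perm

open Equiv.Perm in
theorem stmt12_general {V : Type*} [Fintype V] [DecidableEq V]
    (σ C D : Equiv.Perm V)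
    (hinv : ∀ x, σ (σ x) = x) (hfpf : ∀ x, σ x ≠ x)
    (haccC : ∀ x ∈ C.support, ∀ y ∈ C.support, σ x ≠ y)
    (haccD : ∀ x ∈ D.support, ∀ y ∈ D.support, σ x ≠ y)
    (hcompat : ∀ x ∈ C.support, ∀ y ∈ D.support, σ x ≠ y ∧ x ≠ y) :
    C * D = D * C ∧
    (∀ x, (σ * (C * (σ * C⁻¹ * σ)) * (D * (σ * D⁻¹ * σ)))
        ((σ * (C * (σ * C⁻¹ * σ)) * (D * (σ * D⁻¹ * σ))) x) = x) ∧
    (∀ x, (σ * (C * (σ * C⁻¹ * σ)) * (D * (σ * D⁻¹ * σ))) x ≠ x) := by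
  have hσ : Function.Involutive σ := hinv
  have hσσ : σ * σ = 1 := Equiv.ext hinv
  have hCD : C.Disjoint D := fun x => by
    by_contra! h
    exact (hcompat x (mem_support.mpr h.1) x (mem_support.mpr h.2)).2 rfl
  have hCD' : C.Disjoint (σ * D⁻¹ * σ) :=
    disjoint_conj_inv_of_forall_support_ne hσ fun x hx y hy => (hcompat x hx y hy).1
  have hDC' : D.Disjoint (σ * C⁻¹ * σ) :=
    disjoint_conj_inv_of_forall_support_ne hσ fun y hy x hx h =>
      (hcompat x hx y hy).1 (h ▸ hσ y)
  have hC'D' : (σ * C⁻¹ * σ).Disjoint (σ * D⁻¹ * σ) := by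
    simpa [inv_eq_of_mul_eq_one_right hσσ] using hCD.inv_left.inv_right.conj σ
  have hAB : (C * (σ * C⁻¹ * σ)).Disjoint (D * (σ * D⁻¹ * σ)) :=
    (hCD.mul_right hCD').mul_left (hDC'.symm.mul_right hC'D')
  refine ⟨hCD.commute, fun x => ?_, fun x h => ?_⟩
  · rw [← mul_apply, mul_mul_mul_self_eq_one hσσ (mul_mul_inv_mul_conj_eq_inv hσσ C)
      (mul_mul_inv_mul_conj_eq_inv hσσ D) hAB.commute, one_apply]
  · exact apply_ne_of_disjoint_mul hAB (mul_conj_inv_apply_ne hσ hfpf haccC)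
      (mul_conj_inv_apply_ne hσ hfpf haccD) x (hσ.eq_iff.mp h)

/-- Two compatible acceptable cycles `C` and `D` for a fixed-point-free
involution `σ` commute, and multiplying `σ` by both cycles together with
their companion cycles (`C' = σC⁻¹σ`, `D' = σD⁻¹σ`) again yields a
fixed-point-free involution (a perfect matching). -/
theorem stmt12 {V : Type*} [Fintype V] [DecidableEq V]
    (σ C D : Equiv.Perm V)
    (hinv : ∀ x, σ (σ x) = x) (hfpf : ∀ x, σ x ≠ x)
    (hC : C.IsCycle) (hD : D.IsCycle)
    (haccC : ∀ x ∈ C.support, ∀ y ∈ C.support, σ x ≠ y)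
    (haccD : ∀ x ∈ D.support, ∀ y ∈ D.support, σ x ≠ y)
    (hcompat : ∀ x ∈ C.support, ∀ y ∈ D.support, σ x ≠ y ∧ x ≠ y) :
    C * D = D * C ∧
    (∀ x, (σ * (C * (σ * C⁻¹ * σ)) * (D * (σ * D⁻¹ * σ)))
        ((σ * (C * (σ * C⁻¹ * σ)) * (D * (σ * D⁻¹ * σ))) x) = x) ∧
    (∀ x, (σ * (C * (σ * C⁻¹ * σ)) * (D * (σ * D⁻¹ * σ))) x ≠ x) :=
  stmt12_general σ C D hinv hfpf haccC haccD hcompat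
end
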